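/- The derivative d₁ obeys the Leibniz rule with respect to the left action: for all f ∈ A and ω ∈ Ω¹, d₁(f ▷ ω) = (d₀ f) • ω + f·(d₁ ω), where f·(d₁ ω) is the pointwise (componentwise) scalar multiple on Ω². -/

import Mathlib

open Complex

noncomputable section

/-- The algebra `A = C^∞(ℝ, ℂ)`: we work with plain functions `ℝ → ℂ`
and carry smoothness as predicates. -/
abbrev A := ℝ → ℂ

/-- Membership in `C^∞(ℝ, ℂ)`. -/
def SmoothFn (f : A) : Prop := ContDiff ℝ (⊤ : ℕ∞) f

/-- One-forms `Ω¹`: the pair `(a, b)` represents `dx·a + η·b`. -/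
abbrev Ω1 := A × A

/-- A one-form with smooth components. -/
def SmoothForm (m : Ω1) : Prop := SmoothFn m.1 ∧ SmoothFn m.2

/-- The twisted left action `f ▷ (a, b) = (f·a, f·b + 2·f′·a)`,
encoding `f·dx = dx·f + 2η·f′` and `f·η = η·f`. -/
noncomputable def leftAct (f : A) (m : Ω1) : Ω1 :=
  (f * m.1, f * m.2 + 2 * deriv f * m.1)

/-- The right action `(a, b)·g = (a·g, b·g)`. -/
def rightAct (m : Ω1) (g : A) : Ω1 := (m.1 * g, m.2 * g)

/-- The exterior derivative `d₀ f = (f′, f″)`, i.e. `df = dx·f′ + η·f″`. -/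
noncomputable def d0 (f : A) : Ω1 := (deriv f, deriv (deriv f))

/-- Two-forms `Ω²`: the pair `(u, v)` represents `dx•dx·u + dx•η·v`. -/
abbrev Ω2 := A × A

/-- The product of one-forms `(a, b) • (c, d) = (a·c, 2·a′·c + a·d − b·c)`,
induced by `η•η = 0` and `η•dx = −dx•η`. -/
noncomputable def wedge (m n : Ω1) : Ω2 :=
  (m.1 * n.1, 2 * deriv m.1 * n.1 + m.1 * n.2 - m.2 * n.1)

/-- The derivative on one-forms, `d₁(a, b) = (b − a′, b′ − a″)`. -/
noncomputable def d1 (m : Ω1) : Ω2 :=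
  (m.2 - deriv m.1, deriv m.2 - deriv (deriv m.1))

/-- Pointwise complex conjugation on `A`. -/
noncomputable def conjA (f : A) : A := fun x => (starRingEnd ℂ) (f x)

/-- The conjugation on `Ω¹`: `(a, b)* = (conj a, 2·(conj a)′ − conj b)`,
encoding `dx* = dx`, `η* = −η`. -/
noncomputable def star1 (m : Ω1) : Ω1 :=
  (conjA m.1, 2 * deriv (conjA m.1) - conjA m.2)

/-- The conjugation on `Ω²` is componentwise. -/
noncomputable def star2 (w : Ω2) : Ω2 := (conjA w.1, conjA w.2)

/-- The one-form `dx = (1, 0)`. -/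
def dxF : Ω1 := (1, 0)

/-- The one-form `η = (0, 1)`. -/
def etaF : Ω1 := (0, 1)

lemma smooth_deriv {f : A} (hf : SmoothFn f) : SmoothFn (deriv f) :=
  (contDiff_infty_iff_deriv.mp hf).2

lemma smooth_diff {f : A} (hf : SmoothFn f) : Differentiable ℝ f :=
  hf.differentiable (by simp)

lemma deriv_mul_fn {f g : A} (hf : SmoothFn f) (hg : SmoothFn g) :
    deriv (f * g) = deriv f * g + f * deriv g := by
  funext x
  exact deriv_mul (smooth_diff hf x) (smooth_diff hg x)

lemma deriv_add_fn {f g : A} (hf : SmoothFn f) (hg : SmoothFn g) :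
    deriv (f + g) = deriv f + deriv g := by
  funext x
  exact deriv_add (smooth_diff hf x) (smooth_diff hg x)

lemma smoothMul' {f g : A} (hf : SmoothFn f) (hg : SmoothFn g) : SmoothFn (f * g) :=
  hf.mul hg

lemma smooth_two : SmoothFn (2 : A) := contDiff_const

/-- the Leibniz rule `d₁(f ▷ ω) = (d₀ f) • ω + f·(d₁ ω)`. -/
theorem d1_leibniz_left (f : A) (hf : SmoothFn f) (ω : Ω1) (hω : SmoothForm ω) :
    d1 (leftAct f ω) = wedge (d0 f) ω + (f * (d1 ω).1, f * (d1 ω).2) := by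
  obtain ⟨ha, hb⟩ := hω
  have hf' := smooth_deriv hf
  have hf'' := smooth_deriv hf'
  have ha' := smooth_deriv ha
  have h2f' : SmoothFn (2 * deriv f) := smoothMul' smooth_two hf'
  simp only [d1, leftAct, wedge, d0, Prod.mk_add_mk, Prod.mk.injEq]
  rw [deriv_mul_fn hf ha,
      deriv_add_fn (smoothMul' hf hb) (smoothMul' h2f' ha),
      deriv_mul_fn hf hb, deriv_mul_fn h2f' ha,
      deriv_add_fn (smoothMul' hf' ha) (smoothMul' hf ha'),
      deriv_mul_fn hf' ha, deriv_mul_fn hf ha',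
      deriv_mul_fn smooth_two hf']
  have h2 : deriv (2 : A) = 0 := deriv_const' 2
  constructor <;> (try rw [h2]) <;> ring
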